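/- arXiv:2107.06585 — 9 statements merged into one kernel-verified Lean document; each statement's English description precedes it below -/
import Mathlib

section
/- A quantum channel D on d-dimensional systems satisfies ⟨i|D(ρ)|i⟩ = ⟨i|ρ|i⟩ for all density matrices ρ and all basis states |i⟩ if and only if there exists a correlation matrix C such that D(X) = X ∘ C for all X. -/
/-!
Feeding the pure states `|k⟩⟨k|` to `D` shows that `D(|k⟩⟨k|)` has diagonal `δ_k`, so the Choi
matrix `J((i,k),(j,l)) = D(|k⟩⟨l|)_{ij}` has a zero diagonal entry at `(i,k)` whenever `i ≠ k`.
As `J` is positive semidefinite by complete positivity, the rows and columns through these entries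
vanish, i.e. `D(|k⟩⟨l|) = C_{kl} |k⟩⟨l|` with `C_{kl} = J((k,k),(l,l))`. This `C` is a principal
submatrix of `J`, hence positive semidefinite, with `C_{kk} = 1`; linearity gives `D X = X ∘ C`.
The converse holds because `X ∘ C` has the diagonal of `X` when `C` has unit diagonal.
-/

open Matrix
open scoped Kronecker ComplexOrder

noncomputable section

/-- The Schur-product (Hadamard-product) superoperator `X ↦ X ∘ C`. -/
def schurMap {d : ℕ} (C : Matrix (Fin d) (Fin d) ℂ) :
    Matrix (Fin d) (Fin d) ℂ →ₗ[ℂ] Matrix (Fin d) (Fin d) ℂ where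
  toFun X := X.hadamard C
  map_add' X Y := by ext i j; simp [Matrix.hadamard]; ring
  map_smul' c X := by ext i j; simp [Matrix.hadamard]; ring

/-- The extension `E ⊗ I_n` of a superoperator, applied to a bipartite matrix. -/
def tensExt {d : ℕ} (E : Matrix (Fin d) (Fin d) ℂ →ₗ[ℂ] Matrix (Fin d) (Fin d) ℂ) (n : ℕ)
    (ρ : Matrix (Fin d × Fin n) (Fin d × Fin n) ℂ) :
    Matrix (Fin d × Fin n) (Fin d × Fin n) ℂ :=
  Matrix.of fun p q => ∑ i, ∑ j, (E (Matrix.single i j 1)) p.1 q.1 * ρ (i, p.2) (j, q.2)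

/-- Complete positivity: every extension `E ⊗ I_n` preserves positive semidefiniteness. -/
def IsCP {d : ℕ} (E : Matrix (Fin d) (Fin d) ℂ →ₗ[ℂ] Matrix (Fin d) (Fin d) ℂ) : Prop :=
  ∀ (n : ℕ) (ρ : Matrix (Fin d × Fin n) (Fin d × Fin n) ℂ),
    ρ.PosSemidef → (tensExt E n ρ).PosSemidef

/-- Trace preservation. -/
def IsTP {d : ℕ} (E : Matrix (Fin d) (Fin d) ℂ →ₗ[ℂ] Matrix (Fin d) (Fin d) ℂ) : Prop :=
  ∀ X, (E X).trace = X.trace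

/-- Quantum channel: completely positive and trace-preserving. -/
def IsCPTP {d : ℕ} (E : Matrix (Fin d) (Fin d) ℂ →ₗ[ℂ] Matrix (Fin d) (Fin d) ℂ) : Prop :=
  IsCP E ∧ IsTP E

/-- The Jamiołkowski matrix `J(E) = (E ⊗ I)(|Ψ⟩⟨Ψ|)`, with entries
`J(E)_{(i,k),(j,l)} = E(|k⟩⟨l|)_{i j} / d`. -/
def jam {d : ℕ} (E : Matrix (Fin d) (Fin d) ℂ →ₗ[ℂ] Matrix (Fin d) (Fin d) ℂ) :
    Matrix (Fin d × Fin d) (Fin d × Fin d) ℂ :=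
  Matrix.of fun p q => (E (Matrix.single p.2 q.2 1)) p.1 q.1 / d

/-- Controlled unitary `U = Σ_i |i⟩⟨i| ⊗ U_i`. -/
def ctrl {d n : ℕ} (Us : Fin d → Matrix (Fin n) (Fin n) ℂ) :
    Matrix (Fin d × Fin n) (Fin d × Fin n) ℂ :=
  Matrix.of fun p q => (if p.1 = q.1 then (1 : ℂ) else 0) * (Us p.1) p.2 q.2



namespace Matrix.PosSemidef

variable {𝕜 n : Type*} [RCLike 𝕜] [Fintype n] {M : Matrix n n 𝕜}

theorem col_eq_zero_of_diag_eq_zero (hM : M.PosSemidef) {p : n} (hp : M p p = 0) (q : n) :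
    M q p = 0 := by
  classical
  have hcol : M *ᵥ Pi.single p 1 = 0 := by
    rw [← hM.dotProduct_mulVec_zero_iff, Pi.star_single, star_one, single_dotProduct,
      mulVec_single_one, one_mul]
    exact hp
  simpa [mulVec_single_one] using congrFun hcol q

theorem row_eq_zero_of_diag_eq_zero (hM : M.PosSemidef) {p : n} (hp : M p p = 0) (q : n) :
    M p q = 0 := by
  rw [← hM.isHermitian.apply, hM.col_eq_zero_of_diag_eq_zero hp, star_zero]

end Matrix.PosSemidef

protected theorem Matrix.PosSemidef.single_self {n R : Type*} [DecidableEq n] [Ring R]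
    [PartialOrder R] [StarRing R] [StarOrderedRing R] (k : n) {r : R} (hr : 0 ≤ r) :
    (single k k r).PosSemidef := by
  rw [← diagonal_single]
  exact PosSemidef.diagonal (Pi.single_nonneg.2 hr)

theorem Matrix.apply_eq_hadamard_of_apply_single {n R : Type*} [Fintype n] [DecidableEq n]
    [CommSemiring R] {E : Matrix n n R →ₗ[R] Matrix n n R} {C : Matrix n n R}
    (hE : ∀ k l, E (single k l 1) = single k l (C k l)) (X : Matrix n n R) :
    E X = X ⊙ C := by
  induction X using Matrix.induction_on' with
  | h_zero => simp
  | h_add X Y hX hY => rw [map_add, hX, hY, add_hadamard]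
  | h_std_basis k l x =>
    have hsingle : single k l x = x • single k l 1 := by rw [smul_single, smul_eq_mul, mul_one]
    rw [hsingle, map_smul, hE]
    ext i j
    simp only [smul_apply, hadamard_apply, single_apply, smul_eq_mul]
    split_ifs with h
    · obtain ⟨rfl, rfl⟩ := h
      ring
    · simp

section Choi

variable {d : ℕ}

/-- The unnormalised Jamiołkowski matrix, `choiMatrix E = d • jam E`. -/
def choiMatrix (E : Matrix (Fin d) (Fin d) ℂ →ₗ[ℂ] Matrix (Fin d) (Fin d) ℂ) :
    Matrix (Fin d × Fin d) (Fin d × Fin d) ℂ :=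
  Matrix.of fun p q => E (single p.2 q.2 1) p.1 q.1

def maxEntangledVec (d : ℕ) : Fin d × Fin d → ℂ := fun p => if p.1 = p.2 then 1 else 0

theorem tensExt_vecMulVec_maxEntangledVec
    (E : Matrix (Fin d) (Fin d) ℂ →ₗ[ℂ] Matrix (Fin d) (Fin d) ℂ) :
    tensExt E d (vecMulVec (maxEntangledVec d) (star (maxEntangledVec d))) = choiMatrix E := by
  ext ⟨i, k⟩ ⟨j, l⟩
  simp [tensExt, choiMatrix, maxEntangledVec, vecMulVec_apply, apply_ite (star : ℂ → ℂ)]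

theorem IsCP.choiMatrix_posSemidef {E : Matrix (Fin d) (Fin d) ℂ →ₗ[ℂ] Matrix (Fin d) (Fin d) ℂ}
    (hE : IsCP E) : (choiMatrix E).PosSemidef :=
  tensExt_vecMulVec_maxEntangledVec E ▸ hE d _ (posSemidef_vecMulVec_self_star _)

theorem IsCP.apply_single_eq_single
    {E : Matrix (Fin d) (Fin d) ℂ →ₗ[ℂ] Matrix (Fin d) (Fin d) ℂ} (hE : IsCP E)
    (hdiag : ∀ k i, E (single k k 1) i i = single k k 1 i i) (k l : Fin d) :
    E (single k l 1) = single k l (E (single k l 1) k l) := by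
  have hJ := hE.choiMatrix_posSemidef
  have hzero : ∀ i k : Fin d, i ≠ k → choiMatrix E (i, k) (i, k) = 0 := fun i k h =>
    (hdiag k i).trans (single_apply_of_row_ne (Ne.symm h) k i 1)
  ext i j
  by_cases hik : i = k
  · subst hik
    by_cases hjl : j = l
    · subst hjl
      simp
    · rw [single_apply_of_col_ne _ _ (Ne.symm hjl)]
      exact hJ.col_eq_zero_of_diag_eq_zero (hzero j l hjl) (i, i)
  · rw [single_apply_of_row_ne (Ne.symm hik)]
    exact hJ.row_eq_zero_of_diag_eq_zero (hzero i k hik) (j, l)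

end Choi

/-- a quantum channel preserves all occupations in the distinguished
basis iff it is a Schur-product channel with a correlation matrix. -/
theorem stmt1 (d : ℕ) (D : Matrix (Fin d) (Fin d) ℂ →ₗ[ℂ] Matrix (Fin d) (Fin d) ℂ)
    (hD : IsCPTP D) :
    (∀ ρ : Matrix (Fin d) (Fin d) ℂ, ρ.PosSemidef → ρ.trace = 1 →
        ∀ i, (D ρ) i i = ρ i i) ↔
      ∃ C : Matrix (Fin d) (Fin d) ℂ, C.PosSemidef ∧ (∀ i, C i i = 1) ∧
        ∀ X, D X = X.hadamard C := by
  constructor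
  · intro hocc
    have hdiag : ∀ k i, D (single k k 1) i i = single k k 1 i i := fun k i =>
      hocc _ (PosSemidef.single_self k zero_le_one) (trace_single_eq_same k 1) i
    refine ⟨(choiMatrix D).submatrix (fun k => (k, k)) (fun k => (k, k)),
      hD.1.choiMatrix_posSemidef.submatrix _, fun k => ?_,
      apply_eq_hadamard_of_apply_single (hD.1.apply_single_eq_single hdiag)⟩
    simpa [choiMatrix] using hdiag k k
  · rintro ⟨C, -, hC, hDC⟩ ρ - - i
    rw [hDC, hadamard_apply, hC, mul_one]

end
end

section
/- The channel complementary to a Schur-product channel, defined by D^c_C(ρ) = Tr_1(U(ρ ⊗ |0⟩⟨0|)U†) with U = Σ_i |i⟩⟨i| ⊗ U_i, equals ρ ↦ Σ_i ρ_ii |ψ_i⟩⟨ψ_i| where |ψ_i⟩ = U_i|0⟩; in particular it is a measure-and-prepare (entanglement-breaking) channel. -/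
/-!
The controlled unitary `U = Σ_i |i⟩⟨i| ⊗ U_i` is block diagonal, so the `i`-th diagonal block of
`U (ρ ⊗ |v⟩⟨v|) U†` is `U_i (ρ_ii |v⟩⟨v|) U_i† = ρ_ii |U_i v⟩⟨U_i v|`, and tracing out the first
factor sums these blocks. Each block is positive semidefinite, which gives the
measure-and-prepare form.
-/

open Matrix
open scoped Kronecker ComplexOrder

noncomputable section

section ControlledConjugation

variable {d n : ℕ} (Us : Fin d → Matrix (Fin n) (Fin n) ℂ)
  (X : Matrix (Fin d × Fin n) (Fin d × Fin n) ℂ)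

lemma ctrl_mul_apply (i : Fin d) (a : Fin n) (q : Fin d × Fin n) :
    (ctrl Us * X) (i, a) q = ∑ c, Us i a c * X (i, c) q := by
  simp [mul_apply, ctrl, Fintype.sum_prod_type, ite_mul]

lemma mul_conjTranspose_ctrl_apply (p : Fin d × Fin n) (j : Fin d) (b : Fin n) :
    (X * (ctrl Us)ᴴ) p (j, b) = ∑ e, X p (j, e) * star (Us j b e) := by
  simp [mul_apply, ctrl, Fintype.sum_prod_type, apply_ite (starRingEnd ℂ), mul_ite]

lemma submatrix_ctrl_mul_mul_conjTranspose_ctrl (i : Fin d) :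
    (ctrl Us * X * (ctrl Us)ᴴ).submatrix (Prod.mk i) (Prod.mk i) =
      Us i * X.submatrix (Prod.mk i) (Prod.mk i) * (Us i)ᴴ := by
  ext a b
  rw [submatrix_apply, mul_conjTranspose_ctrl_apply]
  simp only [ctrl_mul_apply]
  simp only [mul_apply, submatrix_apply, conjTranspose_apply, Finset.sum_mul]

end ControlledConjugation

lemma kronecker_submatrix_prodMk {R l m n p : Type*} [Mul R] (A : Matrix l m R)
    (B : Matrix n p R) (i : l) (j : m) :
    (A ⊗ₖ B).submatrix (Prod.mk i) (Prod.mk j) = A i j • B :=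
  rfl

lemma mul_vecMulVec_star_mul_conjTranspose {R m n : Type*} [Fintype n] [CommRing R] [StarRing R]
    (U : Matrix m n R) (v : n → R) :
    U * vecMulVec v (star v) * Uᴴ = vecMulVec (U *ᵥ v) (star (U *ᵥ v)) := by
  rw [mul_vecMulVec, vecMulVec_mul, star_mulVec]

lemma of_sum_apply_prodMk_eq_sum_submatrix {R l n : Type*} [Fintype l] [AddCommMonoid R]
    (X : Matrix (l × n) (l × n) R) :
    (Matrix.of fun a b => ∑ i, X (i, a) (i, b)) = ∑ i, X.submatrix (Prod.mk i) (Prod.mk i) := by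
  ext a b
  simp [Matrix.sum_apply]

lemma partialTrace_ctrl_conj_kronecker_vecMulVec {d n : ℕ}
    (Us : Fin d → Matrix (Fin n) (Fin n) ℂ) (v : Fin n → ℂ) (ρ : Matrix (Fin d) (Fin d) ℂ) :
    (Matrix.of fun a b =>
        ∑ i, (ctrl Us * (ρ ⊗ₖ vecMulVec v (star v)) * (ctrl Us)ᴴ) (i, a) (i, b)) =
      ∑ i, ρ i i • vecMulVec ((Us i) *ᵥ v) (star ((Us i) *ᵥ v)) := by
  rw [of_sum_apply_prodMk_eq_sum_submatrix]
  refine Finset.sum_congr rfl fun i _ => ?_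
  rw [submatrix_ctrl_mul_mul_conjTranspose_ctrl, kronecker_submatrix_prodMk, Matrix.mul_smul,
    Matrix.smul_mul, mul_vecMulVec_star_mul_conjTranspose]

theorem stmt4_general (d : ℕ) (Us : Fin d → Matrix (Fin d) (Fin d) ℂ)
    (v : Fin d → ℂ)
    (ρ : Matrix (Fin d) (Fin d) ℂ) :
    (Matrix.of fun a b =>
        ∑ i, (ctrl Us * (ρ ⊗ₖ vecMulVec v (star v)) * (ctrl Us)ᴴ) (i, a) (i, b)) =
      ∑ i, ρ i i • vecMulVec ((Us i) *ᵥ v) (star ((Us i) *ᵥ v)) ∧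
    ∃ σ : Fin d → Matrix (Fin d) (Fin d) ℂ, (∀ i, (σ i).PosSemidef) ∧
      (Matrix.of fun a b =>
        ∑ i, (ctrl Us * (ρ ⊗ₖ vecMulVec v (star v)) * (ctrl Us)ᴴ) (i, a) (i, b)) =
        ∑ i, ρ i i • σ i := by
  have h := partialTrace_ctrl_conj_kronecker_vecMulVec Us v ρ
  exact ⟨h, _, fun i => posSemidef_vecMulVec_self_star _, h⟩

/-- the complementary channel of a Schur-product channel equals
`ρ ↦ Σ_i ρ_ii |ψ_i⟩⟨ψ_i|` with `|ψ_i⟩ = U_i|0⟩`; in particular it is of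
measure-and-prepare form. -/
theorem stmt4 (d : ℕ) (Us : Fin d → Matrix (Fin d) (Fin d) ℂ)
    (hU : ∀ i, Us i ∈ Matrix.unitaryGroup (Fin d) ℂ)
    (v : Fin d → ℂ) (hv : ∑ x, star (v x) * v x = 1)
    (ρ : Matrix (Fin d) (Fin d) ℂ) :
    (Matrix.of fun a b =>
        ∑ i, (ctrl Us * (ρ ⊗ₖ vecMulVec v (star v)) * (ctrl Us)ᴴ) (i, a) (i, b)) =
      ∑ i, ρ i i • vecMulVec ((Us i) *ᵥ v) (star ((Us i) *ᵥ v)) ∧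
    ∃ σ : Fin d → Matrix (Fin d) (Fin d) ℂ, (∀ i, (σ i).PosSemidef) ∧
      (Matrix.of fun a b =>
        ∑ i, (ctrl Us * (ρ ⊗ₖ vecMulVec v (star v)) * (ctrl Us)ᴴ) (i, a) (i, b)) =
        ∑ i, ρ i i • σ i :=
  stmt4_general d Us v ρ

end
end

section
/- Let C be a d²×d² positive semidefinite matrix, viewed as a d×d block matrix with blocks C_{ij} of size d. If all diagonal blocks are equal to a common correlation matrix C_{11}, then for every completely positive trace-preserving map E, the Schur product J(E) ∘ C is the Jamiołkowski matrix of a completely positive trace-preserving map. -/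
open Matrix
open scoped Kronecker ComplexOrder

noncomputable section

/-!
The channel `F` is prescribed through its Jamiołkowski matrix: `F(|k⟩⟨l|) = E(|k⟩⟨l|) ∘ C^{kl}` with
`C^{kl}_{ij} = C_{(i,k),(j,l)}`. It is completely positive because `(F ⊗ I_n)(ρ)` is a compression
of `(E ⊗ I_{dn})(σ)`, where the ancilla of dimension `dn` also carries a copy of the output index
and `σ`, a reindexing of `C ∘ ρ`, is positive semidefinite by the Schur product theorem. Since the
diagonal blocks of `C` all equal `C0`, `Tr F(X) = Σ_{kl} X_{kl} C0_{kl} Tr E(|k⟩⟨l|)`, and this is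
`Tr X` because `Tr E(|k⟩⟨l|) = δ_{kl}` and `C0` has unit diagonal.
-/

def blockSchur {d : ℕ} (C : Matrix (Fin d × Fin d) (Fin d × Fin d) ℂ)
    (E : Matrix (Fin d) (Fin d) ℂ →ₗ[ℂ] Matrix (Fin d) (Fin d) ℂ) :
    Matrix (Fin d) (Fin d) ℂ →ₗ[ℂ] Matrix (Fin d) (Fin d) ℂ where
  toFun X := Matrix.of fun i j => ∑ k, ∑ l, X k l * E (single k l 1) i j * C (i, k) (j, l)
  map_add' X Y := by ext i j; simp [Finset.sum_add_distrib, add_mul]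
  map_smul' c X := by ext i j; simp [Finset.mul_sum, mul_assoc]

section blockSchur

variable {d : ℕ} (C : Matrix (Fin d × Fin d) (Fin d × Fin d) ℂ)
  (E : Matrix (Fin d) (Fin d) ℂ →ₗ[ℂ] Matrix (Fin d) (Fin d) ℂ)

lemma blockSchur_apply (X : Matrix (Fin d) (Fin d) ℂ) (i j : Fin d) :
    blockSchur C E X i j = ∑ k, ∑ l, X k l * E (single k l 1) i j * C (i, k) (j, l) :=
  rfl

lemma blockSchur_single (k l i j : Fin d) :
    blockSchur C E (single k l 1) i j = E (single k l 1) i j * C (i, k) (j, l) := by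
  rw [blockSchur_apply, Finset.sum_eq_single k, Finset.sum_eq_single l]
  · simp
  · intro l' _ hl'
    simp [single_apply_of_col_ne _ _ (Ne.symm hl')]
  · simp
  · intro k' _ hk'
    simp [single_apply_of_row_ne (Ne.symm hk')]
  · simp

lemma jam_blockSchur : jam (blockSchur C E) = jam E ⊙ C := by
  ext ⟨i, k⟩ ⟨j, l⟩
  simp only [jam, of_apply, hadamard_apply, blockSchur_single]
  ring

lemma trace_blockSchur {C0 : Matrix (Fin d) (Fin d) ℂ}
    (hblocks : ∀ i k l, C (i, k) (i, l) = C0 k l) (X : Matrix (Fin d) (Fin d) ℂ) :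
    (blockSchur C E X).trace = ∑ k, ∑ l, X k l * C0 k l * (E (single k l 1)).trace := by
  simp only [trace, diag, blockSchur_apply, hblocks, Finset.mul_sum]
  rw [Finset.sum_comm]
  refine Finset.sum_congr rfl fun k _ => ?_
  rw [Finset.sum_comm]
  refine Finset.sum_congr rfl fun l _ => Finset.sum_congr rfl fun i _ => ?_
  ring

variable {E}

lemma isCP_blockSchur (hC : C.PosSemidef) (hE : IsCP E) : IsCP (blockSchur C E) := by
  intro n ρ hρ
  let e : Fin d × Fin n ≃ Fin (d * n) := finProdFinEquiv
  let σ : Matrix (Fin d × Fin (d * n)) (Fin d × Fin (d * n)) ℂ :=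
    C.submatrix (fun p => ((e.symm p.2).1, p.1)) (fun p => ((e.symm p.2).1, p.1)) ⊙
      ρ.submatrix (fun p => (p.1, (e.symm p.2).2)) (fun p => (p.1, (e.symm p.2).2))
  have hσ : σ.PosSemidef := (hC.submatrix _).hadamard (hρ.submatrix _)
  have compress : tensExt (blockSchur C E) n ρ =
      (tensExt E (d * n) σ).submatrix (fun p => (p.1, e p)) (fun p => (p.1, e p)) := by
    ext p q
    simp only [tensExt, of_apply, submatrix_apply, σ, hadamard_apply, Equiv.symm_apply_apply,
      blockSchur_single]
    refine Finset.sum_congr rfl fun k _ => Finset.sum_congr rfl fun l _ => ?_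
    ring
  rw [compress]
  exact (hE (d * n) σ hσ).submatrix _

lemma IsTP.trace_single (hE : IsTP E) (k l : Fin d) :
    (E (single k l 1)).trace = if k = l then 1 else 0 := by
  rw [hE]
  split_ifs with h
  · rw [h, trace_single_eq_same]
  · exact trace_single_eq_of_ne _ _ _ h

lemma isTP_blockSchur {C0 : Matrix (Fin d) (Fin d) ℂ}
    (hblocks : ∀ i k l, C (i, k) (i, l) = C0 k l) (hC0diag : ∀ k, C0 k k = 1) (hE : IsTP E) :
    IsTP (blockSchur C E) := by
  intro X
  rw [trace_blockSchur C E hblocks]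
  simp only [hE.trace_single, mul_ite, mul_one, mul_zero, Finset.sum_ite_eq, Finset.mem_univ,
    if_true, hC0diag]
  rfl

end blockSchur

theorem stmt7_general (d : ℕ) (C : Matrix (Fin d × Fin d) (Fin d × Fin d) ℂ)
    (hC : C.PosSemidef)
    (C0 : Matrix (Fin d) (Fin d) ℂ) (hC0diag : ∀ k, C0 k k = 1)
    (hblocks : ∀ i k l, C (i, k) (i, l) = C0 k l)
    (E : Matrix (Fin d) (Fin d) ℂ →ₗ[ℂ] Matrix (Fin d) (Fin d) ℂ) (hE : IsCPTP E) :
    ∃ F : Matrix (Fin d) (Fin d) ℂ →ₗ[ℂ] Matrix (Fin d) (Fin d) ℂ,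
      IsCPTP F ∧ jam F = (jam E).hadamard C :=
  ⟨blockSchur C E, ⟨isCP_blockSchur C hC hE.1, isTP_blockSchur C hblocks hC0diag hE.2⟩,
    jam_blockSchur C E⟩

/-- if `C` is PSD with all diagonal `d×d` blocks equal to a common
correlation matrix, then `J(E) ∘ C` is the Jamiołkowski matrix of a CPTP map for
every CPTP map `E`. -/
theorem stmt7 (d : ℕ) (C : Matrix (Fin d × Fin d) (Fin d × Fin d) ℂ)
    (hC : C.PosSemidef)
    (C0 : Matrix (Fin d) (Fin d) ℂ) (hC0 : C0.PosSemidef) (hC0diag : ∀ k, C0 k k = 1)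
    (hblocks : ∀ i k l, C (i, k) (i, l) = C0 k l)
    (E : Matrix (Fin d) (Fin d) ℂ →ₗ[ℂ] Matrix (Fin d) (Fin d) ℂ) (hE : IsCPTP E) :
    ∃ F : Matrix (Fin d) (Fin d) ℂ →ₗ[ℂ] Matrix (Fin d) (Fin d) ℂ,
      IsCPTP F ∧ jam F = (jam E).hadamard C :=
  stmt7_general d C hC C0 hC0diag hblocks E hE
end
end

section
/- Suppose C is a d²×d² matrix such that for every CPTP map E, the matrix J(E) ∘ C is the Jamiołkowski matrix of a CPTP map. Then the entries C_{ik,il} are independent of the index i, and the diagonal entries C_{ik,ik} all equal 1. -/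
open Matrix
open scoped Kronecker ComplexOrder

noncomputable section

/-! For a unitary `U` and `f : Fin d → Fin d`, let `E` measure in the orthonormal basis of
columns `u_s` of `U` and prepare `|f s⟩`. The trace condition on `J(E) ∘ C` then reads
`∑ s, conj (U k s) * U l s * C (f s, k) (f s, l) = δ k l`.
With `U = 1` and `f` constant this is `C (i, k) (i, k) = 1`. For `k ≠ l`, comparing `f`
constant `i'` with the `f` that sends only `l` to `i` leaves
`conj (U k l) * U l l * (C (i, k) (i, l) - C (i', k) (i', l)) = 0`, and a Householder
reflection mixing `e_k` and `e_l` has both of these entries nonzero. -/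

section Householder

variable {n 𝕜 : Type*} [Fintype n] [DecidableEq n] [RCLike 𝕜]

def householder (w : n → 𝕜) : Matrix n n 𝕜 :=
  1 - (2 / (star w ⬝ᵥ w)) • vecMulVec w (star w)

theorem householder_conjTranspose (w : n → 𝕜) : (householder w)ᴴ = householder w := by
  have : star (star w ⬝ᵥ w) = star w ⬝ᵥ w := (star_dotProduct w w).symm
  simp [householder, conjTranspose_vecMulVec, star_div₀, this]

theorem householder_mul_self {w : n → 𝕜} (hw : w ≠ 0) : householder w * householder w = 1 := by
  have hN : star w ⬝ᵥ w ≠ 0 := fun h => hw (dotProduct_star_self_eq_zero.mp h)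
  have hsq : vecMulVec w (star w) * vecMulVec w (star w) =
      (star w ⬝ᵥ w) • vecMulVec w (star w) := by
    rw [vecMulVec_mul_vecMulVec, vecMulVec_smul]
  simp only [householder, sub_mul, mul_sub, one_mul, mul_one, smul_mul_smul_comm, hsq, smul_smul]
  rw [show 2 / (star w ⬝ᵥ w) * (2 / (star w ⬝ᵥ w)) * (star w ⬝ᵥ w) =
      2 / (star w ⬝ᵥ w) + 2 / (star w ⬝ᵥ w) by field_simp; ring, add_smul]
  abel

end Householder

theorem mul_single_mul_apply {l m n R : Type*} [Fintype m] [DecidableEq m] [Semiring R]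
    (B : Matrix l m R) (D : Matrix m n R) (i j : m) (a : l) (b : n) :
    (B * Matrix.single i j (1 : R) * D) a b = B a i * D j b := by
  simp [mul_apply, Matrix.single, ite_and]

section Kraus

variable {d : ℕ} {ι : Type*} [Fintype ι]

def krausMap (A : ι → Matrix (Fin d) (Fin d) ℂ) :
    Matrix (Fin d) (Fin d) ℂ →ₗ[ℂ] Matrix (Fin d) (Fin d) ℂ where
  toFun X := ∑ s, A s * X * (A s)ᴴ
  map_add' X Y := by simp [Matrix.mul_add, Matrix.add_mul, Finset.sum_add_distrib]
  map_smul' c X := by simp [Finset.smul_sum]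

theorem tensExt_krausMap (A : ι → Matrix (Fin d) (Fin d) ℂ) (n : ℕ)
    (ρ : Matrix (Fin d × Fin n) (Fin d × Fin n) ℂ) :
    tensExt (krausMap A) n ρ = ∑ s, (A s ⊗ₖ (1 : Matrix (Fin n) (Fin n) ℂ)) * ρ *
        (A s ⊗ₖ (1 : Matrix (Fin n) (Fin n) ℂ))ᴴ := by
  ext p q
  simp only [tensExt, krausMap, LinearMap.coe_mk, AddHom.coe_mk, of_apply, Matrix.sum_apply,
    mul_single_mul_apply]
  simp only [mul_apply, kroneckerMap_apply, one_apply, conjTranspose_apply, Fintype.sum_prod_type,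
    apply_ite (star : ℂ → ℂ), star_zero, mul_ite, ite_mul, zero_mul, mul_zero, mul_one,
    Finset.sum_ite_eq, Finset.mem_univ, if_true, Finset.sum_mul]
  rw [Finset.sum_comm_cycle]
  refine Finset.sum_congr rfl fun s _ => ?_
  rw [Finset.sum_comm]
  exact Finset.sum_congr rfl fun _ _ => Finset.sum_congr rfl fun _ _ => by ring

theorem isCPTP_krausMap {A : ι → Matrix (Fin d) (Fin d) ℂ} (hA : ∑ s, (A s)ᴴ * A s = 1) :
    IsCPTP (krausMap A) := by
  constructor
  · intro n ρ hρ
    rw [tensExt_krausMap]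
    exact Finset.sum_induction _ _ (fun _ _ ha hb => ha.add hb) PosSemidef.zero
      fun s _ => hρ.mul_mul_conjTranspose_same _
  · intro X
    calc (∑ s, A s * X * (A s)ᴴ).trace = ∑ s, ((A s)ᴴ * A s * X).trace := by
          rw [trace_sum]
          exact Finset.sum_congr rfl fun s _ => by rw [trace_mul_cycle, Matrix.mul_assoc]
      _ = X.trace := by rw [← trace_sum, ← Finset.sum_mul, hA, Matrix.one_mul]

theorem jam_krausMap_apply (A : ι → Matrix (Fin d) (Fin d) ℂ) (p q : Fin d × Fin d) :
    jam (krausMap A) p q = (∑ s, A s p.1 p.2 * star (A s q.1 q.2)) / d := by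
  simp only [jam, krausMap, LinearMap.coe_mk, AddHom.coe_mk, of_apply, Matrix.sum_apply,
    mul_single_mul_apply, conjTranspose_apply]

end Kraus

section MeasurePrepare

variable {d : ℕ} (U : Matrix (Fin d) (Fin d) ℂ) (f : Fin d → Fin d)

/-- The Kraus operators `|f s⟩⟨u_s|`, where `u_s` is the `s`-th column of `U`. -/
def measurePrepareKraus (s : Fin d) : Matrix (Fin d) (Fin d) ℂ :=
  Matrix.of fun a b => if a = f s then star (U b s) else 0

theorem sum_conjTranspose_mul_measurePrepareKraus :
    ∑ s, (measurePrepareKraus U f s)ᴴ * measurePrepareKraus U f s = U * Uᴴ := by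
  ext b c
  simp [measurePrepareKraus, Matrix.sum_apply, mul_apply, conjTranspose_apply, apply_ite star]

theorem sum_jam_measurePrepare_hadamard (C : Matrix (Fin d × Fin d) (Fin d × Fin d) ℂ)
    (k l : Fin d) :
    ∑ j, (jam (krausMap (measurePrepareKraus U f))).hadamard C (j, k) (j, l) =
      (∑ s, star (U k s) * U l s * C (f s, k) (f s, l)) / d := by
  simp only [hadamard_apply, jam_krausMap_apply, measurePrepareKraus, of_apply, apply_ite star,
    star_star, star_zero, mul_ite, ite_mul, mul_zero, zero_mul, Finset.sum_div, Finset.sum_mul]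
  rw [Finset.sum_comm]
  simp +contextual [div_mul_eq_mul_div, ite_div]

end MeasurePrepare

def HadamardPreservesTP {d : ℕ} (C : Matrix (Fin d × Fin d) (Fin d × Fin d) ℂ) : Prop :=
  ∀ E : Matrix (Fin d) (Fin d) ℂ →ₗ[ℂ] Matrix (Fin d) (Fin d) ℂ, IsCPTP E →
    ∀ k l, ∑ i, ((jam E).hadamard C) (i, k) (i, l) = if k = l then 1 / (d : ℂ) else 0

namespace HadamardPreservesTP

variable {d : ℕ} {C : Matrix (Fin d × Fin d) (Fin d × Fin d) ℂ} {U : Matrix (Fin d) (Fin d) ℂ}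

theorem sum_star_mul_mul_apply (hC : HadamardPreservesTP C) (hU : U * Uᴴ = 1)
    (f : Fin d → Fin d) (k l : Fin d) :
    ∑ s, star (U k s) * U l s * C (f s, k) (f s, l) = if k = l then 1 else 0 := by
  have hd : (d : ℂ) ≠ 0 := Nat.cast_ne_zero.mpr k.pos.ne'
  have h := hC _ (isCPTP_krausMap ((sum_conjTranspose_mul_measurePrepareKraus U f).trans hU)) k l
  rw [sum_jam_measurePrepare_hadamard] at h
  split_ifs at h ⊢ <;> field_simp at h <;> simpa using h

theorem apply_eq_of_unitary (hC : HadamardPreservesTP C) (hU : U * Uᴴ = 1) {k l : Fin d}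
    (hkl : U k l ≠ 0) (hll : U l l ≠ 0) (i i' : Fin d) :
    C (i, k) (i, l) = C (i', k) (i', l) := by
  have h := hC.sum_star_mul_mul_apply hU (fun s => if s = l then i else i') k l
  have h₀ := hC.sum_star_mul_mul_apply hU (fun _ => i') k l
  rw [← h₀, ← sub_eq_zero, ← Finset.sum_sub_distrib,
    Finset.sum_eq_single l (fun s _ hs => by simp [hs]) (by simp)] at h
  simpa [hkl, hll, ← mul_sub, sub_eq_zero] using h.symm

end HadamardPreservesTP

/-- if `J(E) ∘ C` is the Jamiołkowski matrix of a CPTP map (i.e. it is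
PSD and satisfies `Tr₁ = 𝟙/d`) for every CPTP `E`, then the entries `C_{ik,il}` do
not depend on `i` and the diagonal entries of `C` equal `1`. -/
theorem stmt8 (d : ℕ) (C : Matrix (Fin d × Fin d) (Fin d × Fin d) ℂ)
    (hC : ∀ E : Matrix (Fin d) (Fin d) ℂ →ₗ[ℂ] Matrix (Fin d) (Fin d) ℂ, IsCPTP E →
      ((jam E).hadamard C).PosSemidef ∧
      ∀ k l, ∑ i, ((jam E).hadamard C) (i, k) (i, l) =
        if k = l then 1 / (d : ℂ) else 0) :
    (∀ i i' k l, C (i, k) (i, l) = C (i', k) (i', l)) ∧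
    (∀ i k, C (i, k) (i, k) = 1) := by
  have hTP : HadamardPreservesTP C := fun E hE => (hC E hE).2
  have hdiag : ∀ i k, C (i, k) (i, k) = 1 := fun i k => by
    simpa [one_apply] using hTP.sum_star_mul_mul_apply (U := 1) (by simp) (fun _ => i) k k
  refine ⟨fun i i' k l => ?_, hdiag⟩
  rcases eq_or_ne k l with rfl | hkl
  · rw [hdiag, hdiag]
  set w : Fin d → ℂ := Pi.single k 1 + Pi.single l 2
  have hnorm : star w ⬝ᵥ w = 5 := by
    simp [w, dotProduct_add, dotProduct_single, hkl, hkl.symm]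
    norm_num
  have hU : householder w * (householder w)ᴴ = 1 := by
    rw [householder_conjTranspose, householder_mul_self]
    exact fun h => by simpa [w, hkl] using congrFun h k
  refine hTP.apply_eq_of_unitary hU ?_ ?_ i i'
  all_goals simp only [householder, hnorm]; norm_num [vecMulVec_apply, w, hkl, hkl.symm]

end
end

section
/- For unitaries U_1,…,U_d and V_1,…,V_d on C^{d²} and a fixed vector |0⟩, the supermap E ↦ Tr_2(V((E⊗I)(U((·)⊗|0⟩⟨0|)U†))V†), with U = Σ_i |i⟩⟨i|⊗U_i and V = Σ_i |i⟩⟨i|⊗V_i, acts on Jamiołkowski matrices by J(E) ↦ J(E) ∘ C where C_{ik,jl} = ⟨0|U_l† V_j† V_i U_k|0⟩. -/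
open Matrix
open scoped Kronecker ComplexOrder

noncomputable section

/-! A controlled unitary acts blockwise: `ctrl Us * (A ⊗ₖ B) * (ctrl Ws)ᴴ` has `(a, b)` block
`A a b • Us a * B * (Ws b)ᴴ`. Hence the input `|k⟩⟨l| ⊗ |0⟩⟨0|` becomes
`|k⟩⟨l| ⊗ U_k|0⟩⟨0|U_l†`, the extension `E ⊗ I` turns it into `E(|k⟩⟨l|) ⊗ U_k|0⟩⟨0|U_l†`, and
conjugating by `V` and tracing out the ancilla multiplies the `(i, j)` entry of `E(|k⟩⟨l|)` by
`Tr(V_i U_k |0⟩⟨0| U_l† V_j†) = ⟨0|U_l† V_j† V_i U_k|0⟩`. -/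

theorem trace_mul_mul_vecMulVec_mul_mul {l m n α : Type*} [Fintype l] [Fintype m] [Fintype n]
    [CommSemiring α] (A : Matrix n m α) (B : Matrix m l α) (v w : l → α) (C : Matrix l m α)
    (D : Matrix m n α) :
    trace (A * (B * vecMulVec v w * C) * D) = w ⬝ᵥ ((C * D * A * B) *ᵥ v) := by
  have hassoc : A * (B * vecMulVec v w * C) * D = A * B * vecMulVec v w * (C * D) := by
    simp only [Matrix.mul_assoc]
  rw [hassoc, trace_mul_cycle, mul_vecMulVec, trace_vecMulVec, dotProduct_comm]
  simp only [Matrix.mul_assoc]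

section Ctrl

variable {d n : ℕ}

theorem ctrl_mul_kronecker_mul_conjTranspose_ctrl_apply (Us Ws : Fin d → Matrix (Fin n) (Fin n) ℂ)
    (A : Matrix (Fin d) (Fin d) ℂ) (B : Matrix (Fin n) (Fin n) ℂ) (a b : Fin d) (x y : Fin n) :
    (ctrl Us * (A ⊗ₖ B) * (ctrl Ws)ᴴ) (a, x) (b, y) = A a b * (Us a * B * (Ws b)ᴴ) x y := by
  simp only [Matrix.mul_apply, ctrl, conjTranspose_apply, of_apply, kronecker_apply,
    Fintype.sum_prod_type, ite_mul, one_mul, zero_mul, apply_ite star, star_zero, mul_ite,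
    mul_zero, Finset.sum_mul, Finset.mul_sum]
  rw [Finset.sum_comm]
  simp only [Finset.sum_ite_irrel, Finset.sum_ite_eq, Finset.mem_univ, if_true,
    Finset.sum_const_zero]
  exact Finset.sum_congr rfl fun _ _ => Finset.sum_congr rfl fun _ _ => by ring

theorem ctrl_mul_single_kronecker_mul_conjTranspose_ctrl
    (Us Ws : Fin d → Matrix (Fin n) (Fin n) ℂ) (k l : Fin d) (B : Matrix (Fin n) (Fin n) ℂ) :
    ctrl Us * (single k l 1 ⊗ₖ B) * (ctrl Ws)ᴴ = single k l 1 ⊗ₖ (Us k * B * (Ws l)ᴴ) := by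
  ext ⟨a, x⟩ ⟨b, y⟩
  rw [ctrl_mul_kronecker_mul_conjTranspose_ctrl_apply, kronecker_apply, single_apply]
  split_ifs with h
  · rw [h.1, h.2]
  · simp

theorem sum_ctrl_mul_kronecker_mul_conjTranspose_ctrl_apply
    (Us Ws : Fin d → Matrix (Fin n) (Fin n) ℂ) (A : Matrix (Fin d) (Fin d) ℂ)
    (B : Matrix (Fin n) (Fin n) ℂ) (a b : Fin d) :
    ∑ m, (ctrl Us * (A ⊗ₖ B) * (ctrl Ws)ᴴ) (a, m) (b, m) = A a b * trace (Us a * B * (Ws b)ᴴ) := by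
  simp only [ctrl_mul_kronecker_mul_conjTranspose_ctrl_apply, trace, diag_apply, Finset.mul_sum]

end Ctrl

theorem tensExt_kronecker {d : ℕ} (E : Matrix (Fin d) (Fin d) ℂ →ₗ[ℂ] Matrix (Fin d) (Fin d) ℂ)
    (n : ℕ) (A : Matrix (Fin d) (Fin d) ℂ) (B : Matrix (Fin n) (Fin n) ℂ) :
    tensExt E n (A ⊗ₖ B) = E A ⊗ₖ B := by
  ext ⟨a, x⟩ ⟨b, y⟩
  conv_rhs => rw [matrix_eq_sum_single A]
  simp only [tensExt, of_apply, kronecker_apply, map_sum, Matrix.sum_apply, Finset.sum_mul]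
  refine Finset.sum_congr rfl fun i _ => Finset.sum_congr rfl fun j _ => ?_
  have hsingle : single i j (A i j) = A i j • single i j 1 := by
    rw [smul_single, smul_eq_mul, mul_one]
  rw [hsingle, map_smul, Matrix.smul_apply, smul_eq_mul]
  ring

theorem stmt10_general (d : ℕ) (Us Vs : Fin d → Matrix (Fin (d * d)) (Fin (d * d)) ℂ)
    (v : Fin (d * d) → ℂ)
    (E : Matrix (Fin d) (Fin d) ℂ →ₗ[ℂ] Matrix (Fin d) (Fin d) ℂ) :
    (Matrix.of fun p q : Fin d × Fin d =>
        (∑ m, (ctrl Vs *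
            tensExt E (d * d)
              (ctrl Us * ((Matrix.single p.2 q.2 1) ⊗ₖ vecMulVec v (star v)) *
                (ctrl Us)ᴴ) *
            (ctrl Vs)ᴴ) (p.1, m) (q.1, m)) / d) =
      (jam E).hadamard
        (Matrix.of fun p q : Fin d × Fin d =>
          star v ⬝ᵥ (((Us q.2)ᴴ * (Vs q.1)ᴴ * Vs p.1 * Us p.2) *ᵥ v)) := by
  ext ⟨i, k⟩ ⟨j, l⟩
  rw [of_apply, hadamard_apply, of_apply, jam, of_apply,
    ctrl_mul_single_kronecker_mul_conjTranspose_ctrl, tensExt_kronecker,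
    sum_ctrl_mul_kronecker_mul_conjTranspose_ctrl_apply, trace_mul_mul_vecMulVec_mul_mul,
    div_mul_eq_mul_div]

/-- the supermap built from controlled unitaries `U = Σ|i⟩⟨i|⊗U_i`,
`V = Σ|i⟩⟨i|⊗V_i` (ancilla of dimension `d²` prepared in `|0⟩`, discarded at the
end) acts on Jamiołkowski matrices by `J(E) ↦ J(E) ∘ C` with
`C_{ik,jl} = ⟨0|U_l† V_j† V_i U_k|0⟩`. -/
theorem stmt10 (d : ℕ) (Us Vs : Fin d → Matrix (Fin (d * d)) (Fin (d * d)) ℂ)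
    (hU : ∀ i, Us i ∈ Matrix.unitaryGroup (Fin (d * d)) ℂ)
    (hV : ∀ i, Vs i ∈ Matrix.unitaryGroup (Fin (d * d)) ℂ)
    (v : Fin (d * d) → ℂ) (hv : ∑ x, star (v x) * v x = 1)
    (E : Matrix (Fin d) (Fin d) ℂ →ₗ[ℂ] Matrix (Fin d) (Fin d) ℂ) (hE : IsCPTP E) :
    (Matrix.of fun p q : Fin d × Fin d =>
        (∑ m, (ctrl Vs *
            tensExt E (d * d)
              (ctrl Us * ((Matrix.single p.2 q.2 1) ⊗ₖ vecMulVec v (star v)) *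
                (ctrl Us)ᴴ) *
            (ctrl Vs)ᴴ) (p.1, m) (q.1, m)) / d) =
      (jam E).hadamard
        (Matrix.of fun p q : Fin d × Fin d =>
          star v ⬝ᵥ (((Us q.2)ᴴ * (Vs q.1)ᴴ * Vs p.1 * Us p.2) *ᵥ v)) :=
  stmt10_general d Us Vs v E
end
end

section
/- For any 2×2 block matrix C = [[C_0, C_1],[C_1†, C_0]] with equal diagonal blocks, the partial transpose of C (transpose on the second tensor factor, viewing C as acting on C²⊗C^d) has the same spectrum as C; consequently, if C is positive semidefinite then C has positive partial transpose and represents a separable (PPT) state. -/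
/-! Transposing every block of `[[C₀, C₁], [C₁ᴴ, C₀]]` amounts to transposing the whole matrix
and then exchanging the two block rows and the two block columns, because the diagonal blocks
are equal; both operations preserve the spectrum and positivity.

For separability write the positive matrix as `Nᴴ N` and split `N = [X | Y]` into its two block
columns, so that `XᴴX = YᴴY = C₀` and `XᴴY = C₁`. Equal Gram matrices give a unitary `U` with
`Y = U X`, and the spectral decomposition `U = ∑ μ P_μ` yields
`C = ∑_μ [[1, μ], [μ̄, 1]] ⊗ Xᴴ P_μ X`, a sum of tensor products of positive semidefinite
matrices since `|μ| = 1`. -/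

open Matrix
open scoped Kronecker ComplexOrder

noncomputable section

/-- Partial transpose on the second tensor factor (blockwise transpose). -/
def ptrans {a b : Type*} (M : Matrix (a × b) (a × b) ℂ) : Matrix (a × b) (a × b) ℂ :=
  Matrix.of fun p q => M (p.1, q.2) (q.1, p.2)

/-- Separability of a bipartite matrix: a finite sum of Kronecker products of
positive semidefinite matrices. -/
def Separable {a b : Type*} [Fintype a] [Fintype b] [DecidableEq a] [DecidableEq b]
    (M : Matrix (a × b) (a × b) ℂ) : Prop :=
  ∃ (k : ℕ) (A : Fin k → Matrix a a ℂ) (B : Fin k → Matrix b b ℂ),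
    (∀ t, (A t).PosSemidef) ∧ (∀ t, (B t).PosSemidef) ∧ M = ∑ t, A t ⊗ₖ B t

/-- The 2×2 block matrix `[[C0, C1], [C1ᴴ, C0]]` with equal diagonal blocks. -/
def blockC {d : ℕ} (C0 C1 : Matrix (Fin d) (Fin d) ℂ) :
    Matrix (Fin 2 × Fin d) (Fin 2 × Fin d) ℂ :=
  Matrix.of fun p q =>
    (if p.1 = q.1 then C0 else if p.1 = 0 then C1 else C1ᴴ) p.2 q.2

open scoped InnerProductSpace

theorem LinearMap.exists_linearIsometry_map_eq_of_inner_eq {𝕜 E F : Type*} [RCLike 𝕜]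
    [AddCommGroup E] [Module 𝕜 E] [NormedAddCommGroup F] [InnerProductSpace 𝕜 F]
    [FiniteDimensional 𝕜 F] (f g : E →ₗ[𝕜] F) (h : ∀ a b, ⟪f a, f b⟫_𝕜 = ⟪g a, g b⟫_𝕜) :
    ∃ U : F →ₗᵢ[𝕜] F, ∀ a, U (f a) = g a := by
  have hnorm : ∀ a, ‖f a‖ = ‖g a‖ := fun a => by
    simpa only [@norm_eq_sqrt_re_inner 𝕜] using congrArg (fun z => √(RCLike.re z)) (h a a)
  have hker : ker f ≤ ker g := fun a ha => by
    rw [mem_ker, ← norm_eq_zero, ← hnorm, norm_eq_zero, ← mem_ker]; exact ha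
  let L : range f →ₗ[𝕜] F := (ker f).liftQ g hker ∘ₗ f.quotKerEquivRange.symm.toLinearMap
  have hL : ∀ a, L ⟨f a, mem_range_self f a⟩ = g a := fun a => by
    simp [L, quotKerEquivRange_symm_apply_image]
  let Liso : range f →ₗᵢ[𝕜] F :=
    ⟨L, by rintro ⟨_, a, rfl⟩; exact (congrArg norm (hL a)).trans (hnorm a).symm⟩
  exact ⟨Liso.extend, fun a => (Liso.extend_apply ⟨f a, mem_range_self f a⟩).trans (hL a)⟩

theorem Matrix.inner_toEuclideanLin_toEuclideanLin {𝕜 m n : Type*} [RCLike 𝕜] [Fintype m]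
    [DecidableEq m] [Fintype n] [DecidableEq n] (X : Matrix m n 𝕜) (a b : EuclideanSpace 𝕜 n) :
    ⟪X.toEuclideanLin a, X.toEuclideanLin b⟫_𝕜 = ⟪a, (Xᴴ * X).toEuclideanLin b⟫_𝕜 := by
  rw [← LinearMap.adjoint_inner_right, ← toEuclideanLin_conjTranspose_eq_adjoint]
  simp [toLpLin_apply, mulVec_mulVec]

theorem Matrix.exists_mem_unitaryGroup_eq_mul_of_conjTranspose_mul_self_eq {𝕜 m n : Type*}
    [RCLike 𝕜] [Fintype m] [DecidableEq m] [Fintype n] [DecidableEq n] {X Y : Matrix m n 𝕜}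
    (h : Xᴴ * X = Yᴴ * Y) : ∃ U ∈ unitaryGroup m 𝕜, Y = U * X := by
  obtain ⟨V, hV⟩ := X.toEuclideanLin.exists_linearIsometry_map_eq_of_inner_eq Y.toEuclideanLin
    fun a b => by rw [inner_toEuclideanLin_toEuclideanLin, inner_toEuclideanLin_toEuclideanLin, h]
  obtain ⟨U, hU⟩ :
      ∃ U : Matrix m m 𝕜, toEuclideanCLM (𝕜 := 𝕜) (n := m) U = V.toContinuousLinearMap :=
    ⟨_, StarAlgEquiv.apply_symm_apply _ _⟩
  refine ⟨U, ?_, ext_iff_mulVec.mpr fun v => ?_⟩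
  · rw [mem_unitaryGroup_iff', ← (EquivLike.injective (toEuclideanCLM (𝕜 := 𝕜) (n := m))).eq_iff,
      map_mul, map_star, map_one, hU, ContinuousLinearMap.star_eq_adjoint,
      ContinuousLinearMap.mul_def, LinearIsometry.adjoint_comp_self]
  · calc Y *ᵥ v = WithLp.ofLp (V (X.toEuclideanLin (WithLp.toLp 2 v))) := by rw [hV]; rfl
      _ = (U * X) *ᵥ v := by rw [← mulVec_mulVec, ← V.coe_toContinuousLinearMap, ← hU]; rfl

section SpectralProjection

variable {R A : Type*} {p : A → Prop} [CommSemiring R] [StarRing R] [MetricSpace R]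
  [IsTopologicalSemiring R] [ContinuousStar R] [Ring A] [StarRing A] [TopologicalSpace A]
  [Algebra R A] [ContinuousFunctionalCalculus R A p]

variable (R) in
def spectralProj (a : A) (μ : R) : A := cfc (({μ} : Set R).indicator 1) a

theorem isSelfAdjoint_spectralProj (a : A) (μ : R) : IsSelfAdjoint (spectralProj R a μ) := by
  rw [IsSelfAdjoint, spectralProj, ← cfc_star]
  exact cfc_congr fun z _ => by by_cases hz : z = μ <;> simp [hz]

theorem spectralProj_mul_self {a : A} (ha : (spectrum R a).Finite) (μ : R) :
    spectralProj R a μ * spectralProj R a μ = spectralProj R a μ := by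
  rw [spectralProj, ← cfc_mul _ _ a (ha.continuousOn _) (ha.continuousOn _)]
  exact cfc_congr fun z _ => by by_cases hz : z = μ <;> simp [hz]

theorem sum_smul_spectralProj {a : A} (ha : (spectrum R a).Finite) (f : R → R) :
    ∑ μ ∈ ha.toFinset, f μ • spectralProj R a μ = cfc f a := by
  simp_rw [spectralProj, ← cfc_smul _ _ a (ha.continuousOn _)]
  rw [← cfc_sum _ a _ fun _ _ => ha.continuousOn _]
  refine cfc_congr fun z hz => ?_
  rw [Finset.sum_apply, Finset.sum_eq_single_of_mem z (ha.mem_toFinset.mpr hz)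
    fun μ _ hμ => by simp [Ne.symm hμ]]
  simp

end SpectralProjection

open scoped Matrix.Norms.L2Operator in
theorem Matrix.exists_sum_smul_posSemidef_eq_of_mem_unitaryGroup {m : Type*} [Fintype m]
    [DecidableEq m] {U : Matrix m m ℂ} (hU : U ∈ unitaryGroup m ℂ) :
    ∃ (S : Finset ℂ) (P : ℂ → Matrix m m ℂ), (∀ μ ∈ S, ‖μ‖ = 1 ∧ (P μ).PosSemidef) ∧
      ∑ μ ∈ S, P μ = 1 ∧ ∑ μ ∈ S, μ • P μ = U := by
  have hfin := U.finite_spectrum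
  have : IsStarNormal U := isStarNormal_of_mem_unitary hU
  refine ⟨hfin.toFinset, spectralProj ℂ U, fun μ hμ => ⟨?_, ?_⟩, ?_, ?_⟩
  · simpa using spectrum.subset_circle_of_unitary hU (hfin.mem_toFinset.mp hμ)
  · set P := spectralProj ℂ U μ
    have hP : P = Pᴴ * P := by
      rw [← star_eq_conjTranspose, (isSelfAdjoint_spectralProj U μ).star_eq,
        spectralProj_mul_self hfin]
    rw [hP]
    exact posSemidef_conjTranspose_mul_self P
  · simpa [cfc_one ℂ U] using sum_smul_spectralProj hfin 1
  · simpa [cfc_id ℂ U] using sum_smul_spectralProj hfin id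

theorem separable_sum_kronecker {a b ι : Type*} [Fintype a] [Fintype b] [DecidableEq a]
    [DecidableEq b] (s : Finset ι) {A : ι → Matrix a a ℂ} {B : ι → Matrix b b ℂ}
    (hA : ∀ i ∈ s, (A i).PosSemidef) (hB : ∀ i ∈ s, (B i).PosSemidef) :
    Separable (∑ i ∈ s, A i ⊗ₖ B i) := by
  refine ⟨s.card, fun t => A (s.equivFin.symm t), fun t => B (s.equivFin.symm t),
    fun t => hA _ (s.equivFin.symm t).2, fun t => hB _ (s.equivFin.symm t).2, ?_⟩
  rw [← s.sum_coe_sort]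
  exact (s.equivFin.symm.sum_comp fun i => A i ⊗ₖ B i).symm

theorem posSemidef_fin_two_of_norm_eq_one {μ : ℂ} (hμ : ‖μ‖ = 1) :
    (!![1, μ; star μ, 1] : Matrix (Fin 2) (Fin 2) ℂ).PosSemidef := by
  have h : !![1, μ; star μ, 1] = vecMulVec ![1, star μ] (star ![1, star μ]) := by
    ext i j
    fin_cases i <;> fin_cases j <;> simp [vecMulVec, Complex.conj_mul', hμ]
  rw [h]
  exact posSemidef_vecMulVec_self_star _

theorem blockC_sum_eq_sum_kronecker {ι : Type*} {d : ℕ} (s : Finset ι) (μ : ι → ℂ)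
    {B : ι → Matrix (Fin d) (Fin d) ℂ} (hB : ∀ i ∈ s, (B i).IsHermitian) :
    blockC (∑ i ∈ s, B i) (∑ i ∈ s, μ i • B i) =
      ∑ i ∈ s, !![1, μ i; star (μ i), 1] ⊗ₖ B i := by
  ext ⟨a, j⟩ ⟨b, k⟩
  fin_cases a <;> fin_cases b <;> simp [blockC, Matrix.sum_apply]
  exact Finset.sum_congr rfl fun i hi => by rw [← (hB i hi).apply j k]; simp

theorem exists_gram_of_posSemidef_blockC {d : ℕ} {C0 C1 : Matrix (Fin d) (Fin d) ℂ}
    (h : (blockC C0 C1).PosSemidef) :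
    ∃ X Y : Matrix (Fin 2 × Fin d) (Fin d) ℂ, Xᴴ * X = C0 ∧ Yᴴ * Y = C0 ∧ Xᴴ * Y = C1 := by
  obtain ⟨N, hN⟩ : ∃ N, blockC C0 C1 = Nᴴ * N := by
    open scoped Matrix.Norms.L2Operator MatrixOrder in
    exact CStarAlgebra.nonneg_iff_eq_star_mul_self.mp h.nonneg
  have block : ∀ a b : Fin 2, (N.submatrix id (a, ·))ᴴ * N.submatrix id (b, ·) =
      (blockC C0 C1).submatrix (a, ·) (b, ·) := fun a b => by
    rw [hN, conjTranspose_submatrix, ← submatrix_mul _ _ _ _ _ Function.bijective_id]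
  refine ⟨N.submatrix id (0, ·), N.submatrix id (1, ·), ?_, ?_, ?_⟩ <;>
    · rw [block]; ext; simp [blockC]

theorem separable_blockC {d : ℕ} {C0 C1 : Matrix (Fin d) (Fin d) ℂ}
    (h : (blockC C0 C1).PosSemidef) : Separable (blockC C0 C1) := by
  obtain ⟨X, Y, hXX, hYY, hXY⟩ := exists_gram_of_posSemidef_blockC h
  obtain ⟨U, hU, rfl⟩ :=
    exists_mem_unitaryGroup_eq_mul_of_conjTranspose_mul_self_eq (hXX.trans hYY.symm)
  obtain ⟨S, P, hP, hsum, hUsum⟩ := exists_sum_smul_posSemidef_eq_of_mem_unitaryGroup hU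
  have hB : ∀ μ ∈ S, (Xᴴ * P μ * X).PosSemidef := fun μ hμ =>
    (hP μ hμ).2.conjTranspose_mul_mul_same X
  have hC0 : C0 = ∑ μ ∈ S, Xᴴ * P μ * X := by
    rw [← Matrix.sum_mul, ← Matrix.mul_sum, hsum, Matrix.mul_one, hXX]
  have hC1 : C1 = ∑ μ ∈ S, μ • (Xᴴ * P μ * X) := by
    rw [← hXY, ← hUsum, Matrix.sum_mul, Matrix.mul_sum]
    simp_rw [Matrix.smul_mul, Matrix.mul_smul, Matrix.mul_assoc]
  rw [hC0, hC1, blockC_sum_eq_sum_kronecker S (fun μ => μ) fun μ hμ => (hB μ hμ).isHermitian]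
  exact separable_sum_kronecker S (fun μ hμ => posSemidef_fin_two_of_norm_eq_one (hP μ hμ).1) hB

theorem Matrix.spectrum_transpose {R n : Type*} [CommRing R] [Fintype n] [DecidableEq n]
    (A : Matrix n n R) : spectrum R Aᵀ = spectrum R A := by
  ext μ
  rw [spectrum.mem_iff, spectrum.mem_iff, ← isUnit_transpose, transpose_sub,
    algebraMap_eq_diagonal, diagonal_transpose, transpose_transpose]

theorem Matrix.spectrum_submatrix_equiv {R m n : Type*} [CommRing R] [Fintype m]
    [DecidableEq m] [Fintype n] [DecidableEq n] (A : Matrix n n R) (e : m ≃ n) :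
    spectrum R (A.submatrix e e) = spectrum R A :=
  AlgEquiv.spectrum_eq (reindexAlgEquiv R R e.symm) A

theorem ptrans_blockC {d : ℕ} (C0 C1 : Matrix (Fin d) (Fin d) ℂ) :
    ptrans (blockC C0 C1) =
      (blockC C0 C1)ᵀ.submatrix ((Equiv.swap 0 1).prodCongr (Equiv.refl _))
        ((Equiv.swap 0 1).prodCongr (Equiv.refl _)) := by
  ext ⟨a, j⟩ ⟨b, k⟩
  fin_cases a <;> fin_cases b <;> simp [ptrans, blockC]

theorem stmt12_general (d : ℕ) (C0 C1 : Matrix (Fin d) (Fin d) ℂ) :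
    spectrum ℂ (ptrans (blockC C0 C1)) = spectrum ℂ (blockC C0 C1) ∧
    ((blockC C0 C1).PosSemidef →
      (ptrans (blockC C0 C1)).PosSemidef ∧ Separable (blockC C0 C1)) := by
  refine ⟨?_, fun h => ⟨?_, separable_blockC h⟩⟩
  · rw [ptrans_blockC, spectrum_submatrix_equiv, spectrum_transpose]
  · rw [ptrans_blockC]
    exact (posSemidef_submatrix_equiv _).mpr h.transpose

/-- for a Hermitian 2×2 block matrix with equal diagonal blocks, the
partial transpose has the same spectrum; hence if it is PSD it has positive partial
transpose and represents a separable (PPT) state. -/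
theorem stmt12 (d : ℕ) (C0 C1 : Matrix (Fin d) (Fin d) ℂ) (hC0 : C0.IsHermitian) :
    spectrum ℂ (ptrans (blockC C0 C1)) = spectrum ℂ (blockC C0 C1) ∧
    ((blockC C0 C1).PosSemidef →
      (ptrans (blockC C0 C1)).PosSemidef ∧ Separable (blockC C0 C1)) :=
  stmt12_general d C0 C1

end
end

section
/- The 9×9 matrix C with 3×3 blocks C = [[1, A, B],[A†, 1, 0],[B†, 0, 1]], where A = |3⟩⟨1| and B = |1⟩⟨1| (in the standard basis of C³), is positive semidefinite with unit diagonal, but its partial transpose has the negative eigenvalue 1 − √2; hence C/9 is an entangled PPT-violating state on C³⊗C³. -/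
open Matrix
open scoped Kronecker ComplexOrder

noncomputable section

/-- The 9×9 matrix `C` with 3×3 blocks `[[1, A, B], [Aᴴ, 1, 0], [Bᴴ, 0, 1]]`, where
`A = |3⟩⟨1|` and `B = |1⟩⟨1|`. -/
def C13 : Matrix (Fin 3 × Fin 3) (Fin 3 × Fin 3) ℂ :=
  Matrix.of fun p q =>
    (![![(1 : Matrix (Fin 3) (Fin 3) ℂ), Matrix.single 2 0 1, Matrix.single 0 0 1],
       ![(Matrix.single 2 0 1)ᴴ, 1, 0],
       ![(Matrix.single 0 0 1)ᴴ, 0, 1]] p.1 q.1) p.2 q.2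

/-!
`C13 p q = 1` exactly when `p = q` or `{p, q}` is one of `{(0,2), (1,0)}`, `{(0,0), (2,0)}`; so `C13`
is the Gram matrix of the unit vectors `e (mergeC13 p)`, where `mergeC13` identifies `(1,0)` with
`(0,2)` and `(2,0)` with `(0,0)`. This gives positivity and the unit diagonal.

The partial transpose moves the off-diagonal ones to `{(0,0), (1,2)}` and `{(0,0), (2,0)}`:
on the span of `e (0,0), e (1,2), e (2,0)` it is `[[1,1,1],[1,1,0],[1,0,1]]`, with eigenvector
`(-√2, 1, 1)` for the eigenvalue `1 - √2 < 0`. The partial transpose of a separable matrix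
`∑ Aₜ ⊗ Bₜ` is `∑ Aₜ ⊗ Bₜᵀ`, which is positive semidefinite, so `C13 / 9` is not separable.
-/

namespace Matrix

variable {ι κ : Type*}

theorem PosSemidef.nonneg_of_mulVec_eq_smul [Fintype ι] {𝕜 : Type*} [RCLike 𝕜]
    {M : Matrix ι ι 𝕜} (hM : M.PosSemidef) {v : ι → 𝕜} (hv : v ≠ 0) {μ : 𝕜}
    (h : M *ᵥ v = μ • v) : 0 ≤ μ := by
  have hquad := hM.dotProduct_mulVec_nonneg v
  rw [h, dotProduct_smul, smul_eq_mul] at hquad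
  have hpos : 0 < star v ⬝ᵥ v := dotProduct_star_self_pos_iff.mpr hv
  simpa [hpos.ne'] using div_nonneg hquad hpos.le

theorem mem_spectrum_of_mulVec_eq_smul [Fintype ι] [DecidableEq ι] {K : Type*} [Field K]
    {M : Matrix ι ι K} {v : ι → K} (hv : v ≠ 0) {μ : K} (h : M *ᵥ v = μ • v) :
    μ ∈ spectrum K M := by
  rw [← spectrum_toLin']
  exact Module.End.HasEigenvalue.mem_spectrum <| Module.End.hasEigenvalue_of_hasEigenvector <|
    Module.End.hasEigenvector_iff.mpr
      ⟨Module.End.mem_eigenspace_iff.mpr (by rwa [toLin'_apply]), hv⟩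

def sameFiber {R : Type*} [Zero R] [One R] [DecidableEq κ] (f : ι → κ) : Matrix ι ι R :=
  of fun p q => if f p = f q then 1 else 0

theorem posSemidef_sameFiber [Finite ι] [Fintype κ] [DecidableEq κ] {R : Type*} [CommRing R]
    [PartialOrder R] [StarRing R] [StarOrderedRing R] (f : ι → κ) :
    (sameFiber f : Matrix ι ι R).PosSemidef := by
  let A : Matrix κ ι R := of fun k p => if f p = k then 1 else 0
  have hgram : sameFiber f = Aᴴ * A := by
    ext p q
    simp [A, sameFiber, mul_apply, conjTranspose_apply, apply_ite (star : R → R)]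
  exact hgram ▸ posSemidef_conjTranspose_mul_self _

end Matrix

section PartialTranspose

variable {a b : Type*}

theorem ptrans_smul (c : ℂ) (M : Matrix (a × b) (a × b) ℂ) : ptrans (c • M) = c • ptrans M :=
  rfl

theorem ptrans_sum {ι : Type*} (s : Finset ι) (M : ι → Matrix (a × b) (a × b) ℂ) :
    ptrans (∑ t ∈ s, M t) = ∑ t ∈ s, ptrans (M t) := by
  ext p q
  simp only [ptrans, of_apply, Matrix.sum_apply]

theorem ptrans_kronecker (A : Matrix a a ℂ) (B : Matrix b b ℂ) : ptrans (A ⊗ₖ B) = A ⊗ₖ Bᵀ :=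
  rfl

theorem Separable.posSemidef_ptrans [Fintype a] [Fintype b] [DecidableEq a] [DecidableEq b]
    {M : Matrix (a × b) (a × b) ℂ} (hM : Separable M) : (ptrans M).PosSemidef := by
  obtain ⟨k, A, B, hA, hB, rfl⟩ := hM
  rw [ptrans_sum]
  exact posSemidef_sum _ fun t _ =>
    ptrans_kronecker (A t) (B t) ▸ (hA t).kronecker (hB t).transpose

end PartialTranspose

def mergeC13 (p : Fin 3 × Fin 3) : Fin 3 × Fin 3 :=
  if p = (1, 0) then (0, 2) else if p = (2, 0) then (0, 0) else p

theorem C13_eq_sameFiber : C13 = sameFiber mergeC13 := by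
  ext ⟨i, j⟩ ⟨k, l⟩
  fin_cases i <;> fin_cases k <;> fin_cases j <;> fin_cases l <;>
    simp [C13, sameFiber, mergeC13, Matrix.single, Prod.ext_iff, Matrix.cons_val_two]

theorem ptrans_C13 : ptrans C13 = 1 + single (0, 0) (1, 2) 1 + single (1, 2) (0, 0) 1 +
    single (0, 0) (2, 0) 1 + single (2, 0) (0, 0) 1 := by
  ext ⟨i, j⟩ ⟨k, l⟩
  fin_cases i <;> fin_cases k <;> fin_cases j <;> fin_cases l <;>
    simp [ptrans, C13, Matrix.single, Prod.ext_iff, Matrix.cons_val_two]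

def ptransC13Eigenvector : Fin 3 × Fin 3 → ℂ :=
  -(Real.sqrt 2 : ℂ) • Pi.single (0, 0) 1 + Pi.single (1, 2) 1 + Pi.single (2, 0) 1

theorem ptransC13Eigenvector_ne_zero : ptransC13Eigenvector ≠ 0 := fun h => by
  simpa [ptransC13Eigenvector] using congr_fun h (1, 2)

theorem ptrans_C13_mulVec_eigenvector :
    ptrans C13 *ᵥ ptransC13Eigenvector = (1 - Real.sqrt 2 : ℂ) • ptransC13Eigenvector := by
  have hsqrt : (Real.sqrt 2 : ℂ) * Real.sqrt 2 = 2 := by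
    rw [← Complex.ofReal_mul, Real.mul_self_sqrt zero_le_two, Complex.ofReal_ofNat]
  rw [ptrans_C13]
  simp only [add_mulVec, one_mulVec, single_mulVec_eq]
  ext p
  fin_cases p <;> simp [ptransC13Eigenvector] <;> first | ring1 | linear_combination -hsqrt

theorem not_zero_le_one_sub_sqrt_two : ¬ (0 : ℂ) ≤ 1 - Real.sqrt 2 := by
  rw [← Complex.ofReal_one, ← Complex.ofReal_sub, Complex.zero_le_real, sub_nonneg, not_le]
  exact Real.one_lt_sqrt_two

/-- `C13` is positive semidefinite with unit diagonal, but its partial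
transpose has the negative eigenvalue `1 − √2`; hence `C13/9` is an entangled state
violating the PPT criterion. -/
theorem stmt13 :
    C13.PosSemidef ∧ (∀ p, C13 p p = 1) ∧
    ((1 - Real.sqrt 2 : ℂ) ∈ spectrum ℂ (ptrans C13)) ∧
    ¬ (ptrans C13).PosSemidef ∧
    ¬ Separable ((9 : ℂ)⁻¹ • C13) := by
  have hnotPSD : ¬ (ptrans C13).PosSemidef := fun h =>
    not_zero_le_one_sub_sqrt_two <|
      h.nonneg_of_mulVec_eq_smul ptransC13Eigenvector_ne_zero ptrans_C13_mulVec_eigenvector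
  refine ⟨C13_eq_sameFiber ▸ posSemidef_sameFiber mergeC13,
    fun p => by simp [C13_eq_sameFiber, sameFiber],
    mem_spectrum_of_mulVec_eq_smul ptransC13Eigenvector_ne_zero ptrans_C13_mulVec_eigenvector,
    hnotPSD, fun hsep => hnotPSD ?_⟩
  have hscaled := hsep.posSemidef_ptrans
  rw [ptrans_smul] at hscaled
  simpa using hscaled.smul (show (0 : ℂ) ≤ 9 by norm_num)

end
end

section
/- Let Ξ_C be the dephasing supermap sending a channel E to the channel with Jamiołkowski matrix J(E) ∘ C, where C is a d²×d² correlation matrix with all diagonal d×d blocks equal. Then for any Schur-product channel D_{C'}, one has Ξ_C[D_{C'}] = D_{C'∘C̃}, where C̃_{ij} := C_{ii,jj}; moreover C̃ is a correlation matrix. -/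
open Matrix
open scoped Kronecker ComplexOrder

noncomputable section

/-! The Jamiołkowski matrix of `D_{C'}` vanishes off the entries `((i,i),(j,j))`, where it is
`C'_{ij}/d`; Schur-multiplying by `C` therefore only sees `C_{ii,jj}`. The matrix `C̃` is the
principal submatrix of `C` on the indices `(i,i)`. -/

theorem jam_schurMap_apply {d : ℕ} (A : Matrix (Fin d) (Fin d) ℂ) (p q : Fin d × Fin d) :
    jam (schurMap A) p q = if p.2 = p.1 ∧ q.2 = q.1 then A p.1 q.1 / d else 0 := by
  obtain ⟨i, k⟩ := p
  obtain ⟨j, l⟩ := q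
  by_cases hik : k = i <;> by_cases hjl : l = j <;>
    simp [jam, schurMap, Matrix.single, hik, hjl]

theorem hadamard_jam_schurMap {d : ℕ} (A : Matrix (Fin d) (Fin d) ℂ)
    (C : Matrix (Fin d × Fin d) (Fin d × Fin d) ℂ) :
    (jam (schurMap A)).hadamard C =
      jam (schurMap (A.hadamard (Matrix.of fun i j => C (i, i) (j, j)))) := by
  ext ⟨i, k⟩ ⟨j, l⟩
  simp only [hadamard_apply, jam_schurMap_apply]
  split_ifs with h
  · obtain ⟨rfl, rfl⟩ := h
    simp [div_mul_eq_mul_div]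
  · simp

theorem stmt15_general (d : ℕ) (C : Matrix (Fin d × Fin d) (Fin d × Fin d) ℂ)
    (hC : C.PosSemidef) (hCdiag : ∀ p, C p p = 1)
    (C' : Matrix (Fin d) (Fin d) ℂ) :
    (jam (schurMap C')).hadamard C =
      jam (schurMap (C'.hadamard (Matrix.of fun i j => C (i, i) (j, j)))) ∧
    (Matrix.of fun i j => C (i, i) (j, j) : Matrix (Fin d) (Fin d) ℂ).PosSemidef ∧
    (∀ i, (Matrix.of fun i j => C (i, i) (j, j) : Matrix (Fin d) (Fin d) ℂ) i i = 1) :=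
  ⟨hadamard_jam_schurMap C' C, hC.submatrix fun i => (i, i), fun i => hCdiag (i, i)⟩

/-- a dephasing superchannel `Ξ_C` (acting as `J(E) ↦ J(E) ∘ C`) maps
a Schur-product channel `D_{C'}` to `D_{C' ∘ C̃}` with `C̃_ij = C_{ii,jj}`, which is
again a correlation matrix. -/
theorem stmt15 (d : ℕ) (C : Matrix (Fin d × Fin d) (Fin d × Fin d) ℂ)
    (hC : C.PosSemidef) (hCdiag : ∀ p, C p p = 1)
    (hblocks : ∀ i i' k l, C (i, k) (i, l) = C (i', k) (i', l))
    (C' : Matrix (Fin d) (Fin d) ℂ) (hC' : C'.PosSemidef) (hC'diag : ∀ i, C' i i = 1) :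
    (jam (schurMap C')).hadamard C =
      jam (schurMap (C'.hadamard (Matrix.of fun i j => C (i, i) (j, j)))) ∧
    (Matrix.of fun i j => C (i, i) (j, j) : Matrix (Fin d) (Fin d) ℂ).PosSemidef ∧
    (∀ i, (Matrix.of fun i j => C (i, i) (j, j) : Matrix (Fin d) (Fin d) ℂ) i i = 1) :=
  stmt15_general d C hC hCdiag C'

end
end

section
/- For a dephasing superchannel Ξ_C realized with unitaries {U_k},{V_i}, the action on diagonal-state inputs satisfies Ξ_C[E](|k⟩⟨k|) = D_{C̃}(E(|k⟩⟨k|)) where C̃_ij = ⟨0|U_k† V_j† V_i U_k|0⟩; consequently the cohering power C_g(Ξ_C[E]) := max_k 𝒞(Ξ_C[E](|k⟩⟨k|)) satisfies C_g(Ξ_C[E]) ≤ C_g(E) for any coherence measure 𝒞 monotone under incoherent (Schur-product) channels. -/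
open Matrix
open scoped Kronecker ComplexOrder

noncomputable section

/-- a dephasing superchannel acts on diagonal-state inputs through a
Schur-product (dephasing) channel, and hence the cohering power
`C_g(E) = max_k 𝒞(E(|k⟩⟨k|))` is monotone under dephasing superchannels, for any
coherence measure `𝒞` monotone under Schur-product channels with correlation
matrices. -/
theorem stmt17 (d : ℕ) (hd : 0 < d)
    (C : Matrix (Fin d × Fin d) (Fin d × Fin d) ℂ)
    (hC : C.PosSemidef) (hCdiag : ∀ p, C p p = 1)
    (hblocks : ∀ i i' k l, C (i, k) (i, l) = C (i', k) (i', l))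
    (E F : Matrix (Fin d) (Fin d) ℂ →ₗ[ℂ] Matrix (Fin d) (Fin d) ℂ)
    (hE : IsCPTP E) (hF : jam F = (jam E).hadamard C)
    (𝒞 : Matrix (Fin d) (Fin d) ℂ → ℝ)
    (hmono : ∀ B : Matrix (Fin d) (Fin d) ℂ, B.PosSemidef → (∀ i, B i i = 1) →
      ∀ ρ, 𝒞 (ρ.hadamard B) ≤ 𝒞 ρ) :
    (∀ k, F (Matrix.single k k 1) =
        (E (Matrix.single k k 1)).hadamard
          (Matrix.of fun i j => C (i, k) (j, k))) ∧
    (haveI : Nonempty (Fin d) := ⟨⟨0, hd⟩⟩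
     Finset.univ.sup' Finset.univ_nonempty
        (fun k => 𝒞 (F (Matrix.single k k 1))) ≤
      Finset.univ.sup' Finset.univ_nonempty
        (fun k => 𝒞 (E (Matrix.single k k 1)))) := by
  have hd0 : (d : ℂ) ≠ 0 := Nat.cast_ne_zero.mpr hd.ne'
  have key : ∀ k, F (Matrix.single k k 1) =
      (E (Matrix.single k k 1)).hadamard
        (Matrix.of fun i j => C (i, k) (j, k)) := by
    intro k
    ext i j
    have := congrFun (congrFun hF (i, k)) (j, k)
    simp only [jam, Matrix.hadamard, Matrix.of_apply] at this ⊢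
    field_simp at this
    linear_combination this
  refine ⟨key, ?_⟩
  apply Finset.sup'_le
  intro k _
  refine le_trans ?_ (Finset.le_sup' (fun k => 𝒞 (E (Matrix.single k k 1)))
    (Finset.mem_univ k))
  rw [key k]
  exact hmono _ (by exact hC.submatrix (fun i => (i, k)))
    (fun i => hCdiag (i, k)) _


end
end
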